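/- Graph density partition bound: for any undirected graph G = (V, E) and any integer k ≤ |V|, there exists a partition of V into k nonempty parts V_1,...,V_k such that the densities of any two parts differ by at most 1, where the density of S is ρ(S) = |E(S)|/|S| (number of edges with both endpoints in S divided by |S|), with ρ(∅) = 0. -/

import Mathlib

def IsPartition {ι α : Type*} (A : ι → Finset α) : Prop :=
  ∀ x : α, ∃! i, x ∈ A i

/-- The density of `S`: the number of edges of `G` with both endpoints in `S`
divided by `|S|` (each such edge corresponds to two ordered adjacent pairs,
hence the division by `2 * |S|`); the density of `∅` is `0`. -/
noncomputable def density {V : Type*} [Fintype V] [DecidableEq V]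
    (G : SimpleGraph V) [DecidableRel G.Adj] (S : Finset V) : ℝ :=
  ((Finset.univ.filter (fun p : V × V => G.Adj p.1 p.2 ∧ p.1 ∈ S ∧ p.2 ∈ S)).card : ℝ) /
    (2 * S.card)

/-!
Among all partitions of `V` into `k` nonempty parts, take one minimising, lexicographically, the
largest density and then the number of parts attaining it. If two parts differed by more than `1`,
move a vertex `v` of maximum degree inside a densest part `S` to a part `T` with
`ρ(T) + 1 < ρ(S)`. Since `ρ(S) > 0`, removing a vertex of at least average degree strictly lowers
the density of `S`, while adding a vertex to a nonempty `T` raises its density by at most `1`, so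
`ρ(T ∪ {v}) < ρ(S)` and the new partition is smaller. Partitions into `k` nonempty parts are
handled as surjections `V → Fin k`, whose fibres are the parts.
-/

open Finset Function

namespace SimpleGraph

variable {V : Type*} (G : SimpleGraph V) [DecidableRel G.Adj]

def degreeIn (S : Finset V) (v : V) : ℕ := #{w ∈ S | G.Adj v w}

lemma degreeIn_le_card (S : Finset V) (v : V) : G.degreeIn S v ≤ #S := card_filter_le _ _

lemma exists_sum_degreeIn_le (S : Finset V) (hS : S.Nonempty) :
    ∃ v ∈ S, ∑ w ∈ S, G.degreeIn S w ≤ #S * G.degreeIn S v := by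
  refine exists_le_of_sum_le hS ?_
  rw [sum_const, smul_eq_mul, mul_sum]

variable [DecidableEq V]

lemma degreeIn_insert_self (T : Finset V) (v : V) :
    G.degreeIn (insert v T) v = G.degreeIn T v := by
  rw [degreeIn, degreeIn, filter_insert, if_neg (G.irrefl)]

lemma degreeIn_insert_of_notMem {T : Finset V} {v : V} (hv : v ∉ T) (w : V) :
    G.degreeIn (insert v T) w = G.degreeIn T w + if G.Adj w v then 1 else 0 := by
  rw [degreeIn, degreeIn, filter_insert]
  split_ifs <;> simp [card_insert_of_notMem, hv]

lemma sum_degreeIn_insert {T : Finset V} {v : V} (hv : v ∉ T) :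
    ∑ w ∈ insert v T, G.degreeIn (insert v T) w =
      ∑ w ∈ T, G.degreeIn T w + 2 * G.degreeIn T v := by
  have hback : ∑ w ∈ T, (if G.Adj w v then 1 else 0) = G.degreeIn T v := by
    simp_rw [degreeIn, card_filter, G.adj_comm]
  rw [sum_insert hv, degreeIn_insert_self,
    sum_congr rfl fun w _ => G.degreeIn_insert_of_notMem hv w, sum_add_distrib, hback]
  ring

end SimpleGraph

section Density

variable {V : Type*} [Fintype V] [DecidableEq V] (G : SimpleGraph V) [DecidableRel G.Adj]

lemma density_eq_sum_degreeIn (S : Finset V) :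
    density G S = (∑ v ∈ S, G.degreeIn S v : ℕ) / (2 * #S) := by
  have hpairs : ({p : V × V | G.Adj p.1 p.2 ∧ p.1 ∈ S ∧ p.2 ∈ S} : Finset _) =
      (S ×ˢ S).filter fun p => G.Adj p.1 p.2 := by
    ext; simp [and_comm]
  rw [density, hpairs, card_filter, sum_product]
  simp only [SimpleGraph.degreeIn, card_filter]

lemma density_nonneg (S : Finset V) : 0 ≤ density G S := by
  unfold density; positivity

lemma density_insert_le {T : Finset V} {v : V} (hT : T.Nonempty) (hv : v ∉ T) :
    density G (insert v T) ≤ density G T + 1 := by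
  rw [density_eq_sum_degreeIn, density_eq_sum_degreeIn, G.sum_degreeIn_insert hv,
    card_insert_of_notMem hv]
  have hd : (G.degreeIn T v : ℝ) ≤ #T := by exact_mod_cast G.degreeIn_le_card T v
  have hn : (1 : ℝ) ≤ #T := by exact_mod_cast hT.card_pos
  generalize ∑ w ∈ T, G.degreeIn T w = E
  rw [div_add_one (by positivity), div_le_div_iff₀ (by positivity) (by positivity)]
  push_cast
  nlinarith

lemma density_erase_lt {S : Finset V} {v : V} (hv : v ∈ S) (hd : 0 < G.degreeIn S v)
    (hmax : ∑ w ∈ S, G.degreeIn S w ≤ #S * G.degreeIn S v) :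
    density G (S.erase v) < density G S := by
  obtain ⟨T, hvT, rfl⟩ : ∃ T, v ∉ T ∧ insert v T = S :=
    ⟨S.erase v, notMem_erase v S, insert_erase hv⟩
  rw [G.sum_degreeIn_insert hvT, card_insert_of_notMem hvT, G.degreeIn_insert_self] at hmax
  rw [G.degreeIn_insert_self] at hd
  rw [erase_insert hvT, density_eq_sum_degreeIn, density_eq_sum_degreeIn,
    G.sum_degreeIn_insert hvT, card_insert_of_notMem hvT]
  have hn : (1 : ℝ) ≤ #T := by exact_mod_cast hd.trans_le (G.degreeIn_le_card T v)
  have hd' : (0 : ℝ) < G.degreeIn T v := by exact_mod_cast hd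
  generalize ∑ w ∈ T, G.degreeIn T w = E at hmax ⊢
  have hmax' : (E : ℝ) + 2 * G.degreeIn T v ≤ (#T + 1) * G.degreeIn T v := by
    exact_mod_cast hmax
  rw [div_lt_div_iff₀ (by positivity) (by positivity)]
  push_cast
  nlinarith

lemma exists_density_erase_lt {S : Finset V} (h : 0 < density G S) :
    ∃ v ∈ S, (S.erase v).Nonempty ∧ density G (S.erase v) < density G S := by
  have hE : ∑ w ∈ S, G.degreeIn S w ≠ 0 := by
    rintro hE
    rw [density_eq_sum_degreeIn, hE] at h
    simp at h
  obtain ⟨v, hv, hmax⟩ := G.exists_sum_degreeIn_le S (nonempty_of_sum_ne_zero hE)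
  have hd : 0 < G.degreeIn S v := Nat.pos_of_ne_zero fun hd => hE (by simpa [hd] using hmax)
  obtain ⟨w, hw⟩ := card_pos.mp hd
  obtain ⟨hwS, hvw⟩ := mem_filter.mp hw
  exact ⟨v, hv, ⟨w, mem_erase.2 ⟨hvw.ne', hwS⟩⟩, density_erase_lt G hv hd hmax⟩

end Density

section Fiber

variable {α ι : Type*} [Fintype α] [DecidableEq ι]

def fiber (c : α → ι) (i : ι) : Finset α := {x | c x = i}

lemma mem_fiber {c : α → ι} {i : ι} {x : α} : x ∈ fiber c i ↔ c x = i := by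
  simp [fiber]

lemma isPartition_fiber (c : α → ι) : IsPartition (fiber c) :=
  fun x => ⟨c x, mem_fiber.2 rfl, fun _ hi => (mem_fiber.1 hi).symm⟩

lemma surjective_iff_fiber_nonempty {c : α → ι} :
    Surjective c ↔ ∀ i, (fiber c i).Nonempty := by
  simp only [Surjective, Finset.Nonempty, mem_fiber]

lemma fiber_update [DecidableEq α] (c : α → ι) (v : α) (j i : ι) :
    fiber (update c v j) i = if i = j then insert v (fiber c i) else (fiber c i).erase v := by
  ext x
  by_cases hx : x = v
  · subst hx; split_ifs with h <;> simp [mem_fiber, h, Ne.symm]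
  · split_ifs <;> simp [mem_fiber, hx]

end Fiber

section LexMax

variable {ι : Type*} [Fintype ι] [Nonempty ι] [DecidableEq ι]

noncomputable def lexMax (g : ι → ℝ) : ℝ ×ₗ ℕ :=
  toLex (univ.sup' univ_nonempty g, #{i | g i = univ.sup' univ_nonempty g})

lemma lexMax_lt {g g' : ι → ℝ} (h : ∀ i, g' i < univ.sup' univ_nonempty g ∨ g' i = g i)
    {i₀ : ι} (hi₀ : g i₀ = univ.sup' univ_nonempty g) (hne : g' i₀ ≠ g i₀) :
    lexMax g' < lexMax g := by
  set M := univ.sup' univ_nonempty g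
  have hle : ∀ i, g' i ≤ M := fun i =>
    (h i).elim le_of_lt fun hi => hi ▸ le_sup' g (mem_univ i)
  have hM : univ.sup' univ_nonempty g' ≤ M := sup'_le _ _ fun i _ => hle i
  rcases hM.lt_or_eq with hlt | heq
  · exact Prod.Lex.lt_iff.2 (Or.inl hlt)
  refine Prod.Lex.lt_iff.2 (Or.inr ⟨heq, ?_⟩)
  show #{i | g' i = univ.sup' univ_nonempty g'} < #{i | g i = M}
  rw [heq]
  refine (card_le_card fun i hi => ?_).trans_lt (card_erase_lt_of_mem (by simpa using hi₀))
  have hi : g' i = M := (mem_filter.1 hi).2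
  have hgi : g' i = g i := (h i).resolve_left hi.not_lt
  refine mem_erase.2 ⟨?_, by simpa [← hgi] using hi⟩
  rintro rfl
  exact hne hgi

end LexMax

section Balance

variable {α ι : Type*} [Fintype α] [DecidableEq α] [Fintype ι] [Nonempty ι] [DecidableEq ι]

lemma exists_lexMax_lt (f : Finset α → ℝ) (hf₀ : ∀ S, 0 ≤ f S)
    (herase : ∀ S, 0 < f S → ∃ v ∈ S, (S.erase v).Nonempty ∧ f (S.erase v) < f S)
    (hinsert : ∀ T v, T.Nonempty → v ∉ T → f (insert v T) ≤ f T + 1)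
    {c : α → ι} (hc : Surjective c) {a b : ι} (hab : f (fiber c b) + 1 < f (fiber c a)) :
    ∃ c' : α → ι, Surjective c' ∧
      lexMax (fun i => f (fiber c' i)) < lexMax (fun i => f (fiber c i)) := by
  simp_rw [surjective_iff_fiber_nonempty] at hc ⊢
  set g := fun i => f (fiber c i)
  obtain ⟨i₀, -, hi₀⟩ := exists_mem_eq_sup' univ_nonempty g
  have hbM : f (fiber c b) + 1 < f (fiber c i₀) := by
    simpa only [hi₀] using hab.trans_le (le_sup' g (mem_univ a))
  obtain ⟨v, hv, hne, hlt⟩ := herase (fiber c i₀) (by linarith [hf₀ (fiber c b)])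
  have hb : b ≠ i₀ := by rintro rfl; linarith
  have hv_mem : ∀ {i}, v ∈ fiber c i → i = i₀ := fun h =>
    (mem_fiber.1 h).symm.trans (mem_fiber.1 hv)
  have hfibb : fiber (update c v b) b = insert v (fiber c b) := by rw [fiber_update, if_pos rfl]
  have hfib₀ : fiber (update c v b) i₀ = (fiber c i₀).erase v := by
    rw [fiber_update, if_neg hb.symm]
  have hother : ∀ i, i ≠ b → i ≠ i₀ → fiber (update c v b) i = fiber c i := by
    intro i hib hii₀
    rw [fiber_update, if_neg hib, erase_eq_of_notMem fun h => hii₀ (hv_mem h)]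
  refine ⟨update c v b, fun i => ?_, lexMax_lt (fun i => ?_) hi₀.symm ?_⟩
  · by_cases hib : i = b
    · rw [hib, hfibb]; exact insert_nonempty v _
    by_cases hii₀ : i = i₀
    · rwa [hii₀, hfib₀]
    · rw [hother i hib hii₀]; exact hc i
  · by_cases hib : i = b
    · left
      rw [hi₀, hib, hfibb]
      linarith [hinsert _ v (hc b) fun h => hb (hv_mem h)]
    by_cases hii₀ : i = i₀
    · left
      rwa [hi₀, hii₀, hfib₀]
    · exact Or.inr (congrArg f (hother i hib hii₀))
  · simp only [hfib₀]
    exact hlt.ne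

theorem exists_surjective_forall_le_add_one (f : Finset α → ℝ) (hf₀ : ∀ S, 0 ≤ f S)
    (herase : ∀ S, 0 < f S → ∃ v ∈ S, (S.erase v).Nonempty ∧ f (S.erase v) < f S)
    (hinsert : ∀ T v, T.Nonempty → v ∉ T → f (insert v T) ≤ f T + 1)
    {c₀ : α → ι} (hc₀ : Surjective c₀) :
    ∃ c : α → ι, Surjective c ∧ ∀ i j, f (fiber c i) ≤ f (fiber c j) + 1 := by
  obtain ⟨c, hc, hmin⟩ := Set.exists_min_image {c : α → ι | Surjective c}
    (fun c => lexMax fun i => f (fiber c i)) (Set.toFinite _) ⟨c₀, hc₀⟩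
  refine ⟨c, hc, fun a b => ?_⟩
  by_contra! hab
  obtain ⟨c', hc', hlt⟩ := exists_lexMax_lt f hf₀ herase hinsert hc hab
  exact (hmin c' hc').not_gt hlt

end Balance

/-- For any graph and any `1 ≤ k ≤ |V|`, the vertex set can be partitioned
into `k` nonempty parts whose densities pairwise differ by at most `1`. -/
theorem density_partition_bound {V : Type*} [Fintype V] [DecidableEq V]
    (G : SimpleGraph V) [DecidableRel G.Adj]
    (k : ℕ) (hk : 1 ≤ k) (hkV : k ≤ Fintype.card V) :
    ∃ P : Fin k → Finset V, IsPartition P ∧ (∀ i, (P i).Nonempty) ∧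
      ∀ i j, |density G (P i) - density G (P j)| ≤ 1 := by
  have : Nonempty (Fin k) := ⟨⟨0, hk⟩⟩
  obtain ⟨e⟩ : Nonempty (Fin k ↪ V) := Embedding.nonempty_of_card_le (by simpa using hkV)
  obtain ⟨c, hc, hbal⟩ := exists_surjective_forall_le_add_one (density G) (density_nonneg G)
    (fun _ => exists_density_erase_lt G) (fun _ _ => density_insert_le G)
    (invFun_surjective e.injective)
  refine ⟨fiber c, isPartition_fiber c, surjective_iff_fiber_nonempty.1 hc, fun i j => ?_⟩
  rw [abs_sub_le_iff]
  constructor <;> linarith [hbal i j, hbal j i]
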